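/- Let x, x⁺ ∈ E, y ∈ F, e ∈ F, β ≥ 0, and c₀, c₁ > 0. Define y⁺ := y − β(∇_y g(x, y) + e). Then ‖y⁺ − y*(x⁺)‖² ≤ (1 + 1/c₁) L_y² ‖x⁺ − x‖² + (1 + c₁)(1 + c₀)(1 − 2βμ_g L_g/(μ_g + L_g)) ‖y − y*(x)‖² + (1 + c₁)(1 + c₀)(β² − 2β/(μ_g + L_g)) ‖∇_y g(x, y)‖² + (1 + c₁)(1 + 1/c₀) β² ‖e‖². -/

import Mathlib

/-!
For a `μ`-strongly convex `f` with `L`-Lipschitz gradient, applying the Baillon–Haddad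
co-coercivity bound to the convex function `f - μ/2 ‖·‖²`, which has an `(L - μ)`-quadratic
majorant, gives Nesterov's interpolation inequality
`μ L ‖u - v‖² + ‖∇f u - ∇f v‖² ≤ (μ + L) ⟪∇f u - ∇f v, u - v⟫`.
Taking `v = y*(x)`, where the gradient vanishes, and expanding `‖y - y*(x) - β ∇g‖²` bounds one
exact gradient step; the gradient error `e` and the move of `y*` from `x` to `x⁺` are then
absorbed by two instances of Young's inequality `‖p + r‖² ≤ (1 + c) ‖p‖² + (1 + 1/c) ‖r‖²`.
-/

noncomputable section

/-- Gradient of `g(x, ·)` at `y`. -/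
def grady {E F : Type*} [NormedAddCommGroup E] [InnerProductSpace ℝ E]
    [NormedAddCommGroup F] [InnerProductSpace ℝ F] [CompleteSpace F]
    (g : E × F → ℝ) (x : E) (y : F) : F := gradient (fun y' => g (x, y')) y

open Set
open scoped RealInnerProductSpace

section Gradient

variable {F : Type*} [NormedAddCommGroup F] [InnerProductSpace ℝ F] [CompleteSpace F]
  {f : F → ℝ} {G : F → F}

theorem HasGradientAt.hasDerivAt_comp_add_smul {g w d : F} {t : ℝ}
    (hf : HasGradientAt f g (w + t • d)) :
    HasDerivAt (fun s : ℝ => f (w + s • d)) ⟪g, d⟫ t := by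
  have hline : HasDerivAt (fun s : ℝ => w + s • d) d t := by
    simpa using ((hasDerivAt_id t).smul_const d).const_add w
  simpa [Function.comp_def] using
    (hasGradientAt_iff_hasFDerivAt.mp hf).comp_hasDerivAt t hline

theorem IsLocalMin.hasGradientAt_eq_zero {g a : F} (h : IsLocalMin f a)
    (hf : HasGradientAt f g a) : g = 0 := by
  have := h.hasFDerivAt_eq_zero (hasGradientAt_iff_hasFDerivAt.mp hf)
  simpa using this

theorem HasGradientAt.sub_half_mul_norm_sq {g p : F} (hf : HasGradientAt f g p) (μ : ℝ) :
    HasGradientAt (fun q => f q - μ / 2 * ‖q‖ ^ 2) (g - μ • p) p := by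
  rw [hasGradientAt_iff_hasFDerivAt] at hf ⊢
  refine (hf.sub (((hasStrictFDerivAt_norm_sq p).hasFDerivAt).const_mul (μ / 2))).congr_fderiv ?_
  ext q
  simp only [sub_apply, InnerProductSpace.toDual_apply_apply, smul_apply, coe_innerSL_apply,
    nsmul_eq_mul, Nat.cast_ofNat, smul_eq_mul, map_sub, map_smul, sub_right_inj]
  ring

theorem ConvexOn.add_inner_sub_le_of_hasGradientAt {g v : F} (hf : ConvexOn ℝ univ f)
    (hv : HasGradientAt f g v) (u : F) : f v + ⟪g, u - v⟫ ≤ f u := by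
  have hline : HasDerivAt (fun s : ℝ => f (v + s • (u - v))) ⟪g, u - v⟫ 0 :=
    HasGradientAt.hasDerivAt_comp_add_smul (by simpa using hv)
  have hconv : ConvexOn ℝ univ (fun s : ℝ => f (v + s • (u - v))) := by
    have hline_eq : (fun s : ℝ => f (v + s • (u - v))) = f ∘ AffineMap.lineMap v u := by
      ext s
      simp [AffineMap.lineMap_apply_module', add_comm]
    simpa [hline_eq] using hf.comp_affineMap (AffineMap.lineMap v u)
  have := hconv.le_slope_of_hasDerivAt (mem_univ 0) (mem_univ 1) one_pos hline
  simp only [slope_def_field, one_smul, add_sub_cancel, zero_smul, add_zero, sub_zero,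
    div_one] at this
  linarith

theorem ConvexOn.inner_sub_nonneg_of_hasGradientAt {g₁ g₂ u v : F} (hf : ConvexOn ℝ univ f)
    (hu : HasGradientAt f g₁ u) (hv : HasGradientAt f g₂ v) : 0 ≤ ⟪g₁ - g₂, u - v⟫ := by
  have h₁ := hf.add_inner_sub_le_of_hasGradientAt hu v
  have h₂ := hf.add_inner_sub_le_of_hasGradientAt hv u
  rw [← neg_sub u v, inner_neg_right] at h₁
  rw [inner_sub_left]
  linarith

theorem le_add_inner_add_of_lipschitz_gradient {ℓ : ℝ} (hG : ∀ p, HasGradientAt f (G p) p)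
    (hlip : ∀ a b, ‖G a - G b‖ ≤ ℓ * ‖a - b‖) (w u : F) :
    f u ≤ f w + ⟪G w, u - w⟫ + ℓ / 2 * ‖u - w‖ ^ 2 := by
  set d := u - w
  let φ : ℝ → ℝ := fun t => f (w + t • d) - t * ⟪G w, d⟫ - ℓ / 2 * t ^ 2 * ‖d‖ ^ 2
  have hφ : ∀ t, HasDerivAt φ (⟪G (w + t • d), d⟫ - ⟪G w, d⟫ - ℓ * t * ‖d‖ ^ 2) t := by
    intro t
    refine ((((hG (w + t • d)).hasDerivAt_comp_add_smul).fun_sub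
      ((hasDerivAt_id' t).mul_const ⟪G w, d⟫)).fun_sub
      (((hasDerivAt_pow 2 t).const_mul (ℓ / 2)).mul_const (‖d‖ ^ 2))).congr_deriv ?_
    push_cast
    ring
  have hφ_nonpos : ∀ t, 0 ≤ t → ⟪G (w + t • d), d⟫ - ⟪G w, d⟫ - ℓ * t * ‖d‖ ^ 2 ≤ 0 := by
    intro t ht
    have hG_step : ‖G (w + t • d) - G w‖ ≤ ℓ * (t * ‖d‖) := by
      simpa [norm_smul, abs_of_nonneg ht] using hlip (w + t • d) w
    calc ⟪G (w + t • d), d⟫ - ⟪G w, d⟫ - ℓ * t * ‖d‖ ^ 2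
        = ⟪G (w + t • d) - G w, d⟫ - ℓ * t * ‖d‖ ^ 2 := by rw [inner_sub_left]
      _ ≤ ‖G (w + t • d) - G w‖ * ‖d‖ - ℓ * t * ‖d‖ ^ 2 := by
        gcongr; exact real_inner_le_norm _ _
      _ ≤ ℓ * (t * ‖d‖) * ‖d‖ - ℓ * t * ‖d‖ ^ 2 := by gcongr
      _ = 0 := by ring
  have hanti : AntitoneOn φ (Ici 0) :=
    antitoneOn_of_hasDerivWithinAt_nonpos (convex_Ici 0)
      (fun t _ => (hφ t).continuousAt.continuousWithinAt) (fun t _ => (hφ t).hasDerivWithinAt)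
      (fun t ht => hφ_nonpos t (by rw [interior_Ici] at ht; exact le_of_lt ht))
  have h01 := hanti self_mem_Ici (show (1 : ℝ) ∈ Ici 0 from mem_Ici.mpr zero_le_one) zero_le_one
  simp only [φ, d, one_smul, add_sub_cancel, one_mul, one_pow, mul_one, zero_smul, add_zero,
    zero_mul, sub_zero, ne_eq, OfNat.ofNat_ne_zero, not_false_eq_true, zero_pow, mul_zero] at h01
  linarith

theorem ConvexOn.add_inner_add_norm_sq_le {ℓ : ℝ} (hf : ConvexOn ℝ univ f)
    (hG : ∀ p, HasGradientAt f (G p) p) (hℓ : 0 < ℓ)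
    (hup : ∀ u w, f u ≤ f w + ⟪G w, u - w⟫ + ℓ / 2 * ‖u - w‖ ^ 2) (a b : F) :
    f a + ⟪G a, b - a⟫ + (2 * ℓ)⁻¹ * ‖G b - G a‖ ^ 2 ≤ f b := by
  -- compare the tangent plane at `a` with the quadratic majorant at `b`, at the point `z`
  -- which minimises the majorant minus that tangent plane
  set D := G b - G a
  set z := b - ℓ⁻¹ • D
  have hlow := hf.add_inner_sub_le_of_hasGradientAt (hG a) z
  have hhigh := hup z b
  have hza : z - a = (b - a) - ℓ⁻¹ • D := by simp only [z]; abel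
  have hzb : z - b = -(ℓ⁻¹ • D) := by simp only [z]; abel
  rw [hza, inner_sub_right, real_inner_smul_right] at hlow
  rw [hzb, inner_neg_right, real_inner_smul_right, norm_neg, norm_smul, mul_pow,
    Real.norm_eq_abs, sq_abs] at hhigh
  have hD : ℓ⁻¹ * ⟪G b, D⟫ - ℓ⁻¹ * ⟪G a, D⟫ = ℓ⁻¹ * ‖D‖ ^ 2 := by
    rw [← mul_sub, ← inner_sub_left, real_inner_self_eq_norm_sq]
  have hscale : ℓ / 2 * (ℓ⁻¹ ^ 2 * ‖D‖ ^ 2) = (2 * ℓ)⁻¹ * ‖D‖ ^ 2 := by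
    field_simp
  have hscale' : ℓ⁻¹ * ‖D‖ ^ 2 = 2 * ((2 * ℓ)⁻¹ * ‖D‖ ^ 2) := by
    field_simp
  linarith

theorem ConvexOn.norm_sub_sq_le_mul_inner {ℓ : ℝ} (hf : ConvexOn ℝ univ f)
    (hG : ∀ p, HasGradientAt f (G p) p) (hℓ : 0 < ℓ)
    (hup : ∀ u w, f u ≤ f w + ⟪G w, u - w⟫ + ℓ / 2 * ‖u - w‖ ^ 2) (u v : F) :
    ‖G u - G v‖ ^ 2 ≤ ℓ * ⟪G u - G v, u - v⟫ := by
  have huv := hf.add_inner_add_norm_sq_le hG hℓ hup u v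
  have hvu := hf.add_inner_add_norm_sq_le hG hℓ hup v u
  rw [norm_sub_rev, ← neg_sub u v, inner_neg_right] at huv
  have hsum : ℓ⁻¹ * ‖G u - G v‖ ^ 2 ≤ ⟪G u - G v, u - v⟫ := by
    have htwo : ℓ⁻¹ = 2 * (2 * ℓ)⁻¹ := by field_simp
    rw [inner_sub_left, htwo]
    linarith
  calc ‖G u - G v‖ ^ 2 = ℓ * (ℓ⁻¹ * ‖G u - G v‖ ^ 2) := by field_simp
    _ ≤ ℓ * ⟪G u - G v, u - v⟫ := by gcongr

theorem StrongConvexOn.mul_norm_sub_sq_le_inner {μ : ℝ} (hf : StrongConvexOn univ μ f)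
    (hG : ∀ p, HasGradientAt f (G p) p) (u v : F) :
    μ * ‖u - v‖ ^ 2 ≤ ⟪G u - G v, u - v⟫ := by
  have h := (strongConvexOn_iff_convex.mp hf).inner_sub_nonneg_of_hasGradientAt
    ((hG u).sub_half_mul_norm_sq μ) ((hG v).sub_half_mul_norm_sq μ)
  have hsplit : G u - μ • u - (G v - μ • v) = (G u - G v) - μ • (u - v) := by module
  rw [hsplit, inner_sub_left, real_inner_smul_left, real_inner_self_eq_norm_sq] at h
  linarith

theorem StrongConvexOn.mul_norm_sq_add_norm_sq_le_inner {μ L : ℝ} (hf : StrongConvexOn univ μ f)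
    (hG : ∀ p, HasGradientAt f (G p) p) (hlip : ∀ a b, ‖G a - G b‖ ≤ L * ‖a - b‖)
    (hμ : 0 ≤ μ) (hμL : μ ≤ L) (u v : F) :
    μ * L * ‖u - v‖ ^ 2 + ‖G u - G v‖ ^ 2 ≤ (μ + L) * ⟪G u - G v, u - v⟫ := by
  rcases hμL.eq_or_lt with rfl | hlt
  · have hmono := hf.mul_norm_sub_sq_le_inner hG u v
    have hnorm := hlip u v
    nlinarith [norm_nonneg (G u - G v), norm_nonneg (u - v)]
  have hup : ∀ u w, f u - μ / 2 * ‖u‖ ^ 2 ≤ f w - μ / 2 * ‖w‖ ^ 2 + ⟪G w - μ • w, u - w⟫ +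
      (L - μ) / 2 * ‖u - w‖ ^ 2 := by
    intro u w
    have hf_up := le_add_inner_add_of_lipschitz_gradient hG hlip w u
    have hsq : ‖u‖ ^ 2 = ‖w‖ ^ 2 + 2 * ⟪w, u - w⟫ + ‖u - w‖ ^ 2 := by
      rw [← norm_add_sq_real, add_sub_cancel]
    rw [inner_sub_left, real_inner_smul_left]
    linear_combination hf_up - μ / 2 * hsq
  have hcoco := (strongConvexOn_iff_convex.mp hf).norm_sub_sq_le_mul_inner
    (fun p => (hG p).sub_half_mul_norm_sq μ) (sub_pos.mpr hlt) hup u v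
  have hsplit : G u - μ • u - (G v - μ • v) = (G u - G v) - μ • (u - v) := by module
  rw [hsplit] at hcoco
  generalize G u - G v = A at hcoco ⊢
  generalize u - v = D at hcoco ⊢
  rw [norm_sub_sq_real, inner_sub_left, real_inner_smul_left, real_inner_smul_right,
    real_inner_self_eq_norm_sq, norm_smul, mul_pow, Real.norm_eq_abs, sq_abs] at hcoco
  linear_combination hcoco

end Gradient

section InnerProduct

variable {F : Type*} [NormedAddCommGroup F] [InnerProductSpace ℝ F]

theorem norm_add_sq_le_one_add_mul (p r : F) {c : ℝ} (hc : 0 < c) :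
    ‖p + r‖ ^ 2 ≤ (1 + c) * ‖p‖ ^ 2 + (1 + 1 / c) * ‖r‖ ^ 2 := by
  have hyoung : 2 * (‖p‖ * ‖r‖) ≤ c * ‖p‖ ^ 2 + 1 / c * ‖r‖ ^ 2 := by
    have hsq : c * ‖p‖ ^ 2 + 1 / c * ‖r‖ ^ 2 - 2 * (‖p‖ * ‖r‖) = 1 / c * (c * ‖p‖ - ‖r‖) ^ 2 := by
      field_simp
      ring
    nlinarith [hsq, show 0 ≤ 1 / c * (c * ‖p‖ - ‖r‖) ^ 2 by positivity]
  nlinarith [norm_add_sq_real p r, real_inner_le_norm p r]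

theorem norm_sub_smul_sq_le_of_le_inner {μ L β : ℝ} {d g : F}
    (hμL : 0 < μ + L) (hβ : 0 ≤ β) (h : μ * L * ‖d‖ ^ 2 + ‖g‖ ^ 2 ≤ (μ + L) * ⟪g, d⟫) :
    ‖d - β • g‖ ^ 2 ≤
      (1 - 2 * β * μ * L / (μ + L)) * ‖d‖ ^ 2 + (β ^ 2 - 2 * β / (μ + L)) * ‖g‖ ^ 2 := by
  have hinner : 2 * β * μ * L / (μ + L) * ‖d‖ ^ 2 + 2 * β / (μ + L) * ‖g‖ ^ 2 ≤
      2 * β * ⟪g, d⟫ := by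
    rw [div_mul_eq_mul_div, div_mul_eq_mul_div, ← add_div, div_le_iff₀ hμL]
    nlinarith
  rw [norm_sub_sq_real, real_inner_smul_right, norm_smul, mul_pow, Real.norm_eq_abs, sq_abs,
    real_inner_comm]
  linarith

end InnerProduct

theorem lower_level_error_bound_general
    {E F : Type*} [NormedAddCommGroup E] [InnerProductSpace ℝ E]
    [NormedAddCommGroup F] [InnerProductSpace ℝ F] [FiniteDimensional ℝ F]
    (g : E × F → ℝ) (ystar : E → F) (μg Lg Ly : ℝ)
    (hμ : 0 < μg) (hμL : μg ≤ Lg)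
    (hdiff : ∀ x : E, Differentiable ℝ (fun y : F => g (x, y)))
    (hsc : ∀ x : E, ConvexOn ℝ Set.univ (fun y : F => g (x, y) - μg / 2 * ‖y‖ ^ 2))
    (hlip : ∀ (x : E) (y z : F), ‖grady g x y - grady g x z‖ ≤ Lg * ‖y - z‖)
    (hmin : ∀ (x : E) (y : F), g (x, ystar x) ≤ g (x, y))
    (hystar_lip : ∀ x₁ x₂ : E, ‖ystar x₁ - ystar x₂‖ ≤ Ly * ‖x₁ - x₂‖)
    (x xplus : E) (y e : F) (β c₀ c₁ : ℝ)
    (hβ : 0 ≤ β) (hc₀ : 0 < c₀) (hc₁ : 0 < c₁)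
    (yplus : F) (hyplus : yplus = y - β • (grady g x y + e)) :
    ‖yplus - ystar xplus‖ ^ 2 ≤
      (1 + 1 / c₁) * Ly ^ 2 * ‖xplus - x‖ ^ 2 +
        (1 + c₁) * (1 + c₀) * (1 - 2 * β * μg * Lg / (μg + Lg)) * ‖y - ystar x‖ ^ 2 +
        (1 + c₁) * (1 + c₀) * (β ^ 2 - 2 * β / (μg + Lg)) * ‖grady g x y‖ ^ 2 +
        (1 + c₁) * (1 + 1 / c₀) * β ^ 2 * ‖e‖ ^ 2 := by
  have hgrad : ∀ p, HasGradientAt (fun y' => g (x, y')) (grady g x p) p :=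
    fun p => (hdiff x p).hasGradientAt
  have hcrit : grady g x (ystar x) = 0 :=
    IsLocalMin.hasGradientAt_eq_zero (Filter.Eventually.of_forall (hmin x)) (hgrad _)
  have hkey := (strongConvexOn_iff_convex.mpr (hsc x)).mul_norm_sq_add_norm_sq_le_inner hgrad
    (hlip x) hμ.le hμL y (ystar x)
  rw [hcrit, sub_zero] at hkey
  have hstep := norm_sub_smul_sq_le_of_le_inner (by linarith) hβ hkey
  have herror := norm_add_sq_le_one_add_mul (y - ystar x - β • grady g x y) ((-β) • e) hc₀
  rw [show y - ystar x - β • grady g x y + (-β) • e = yplus - ystar x by rw [hyplus]; module,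
    norm_smul, mul_pow, Real.norm_eq_abs, sq_abs, neg_sq] at herror
  have hmove := norm_add_sq_le_one_add_mul (yplus - ystar x) (ystar x - ystar xplus) hc₁
  rw [sub_add_sub_cancel] at hmove
  have hystar_sq : ‖ystar x - ystar xplus‖ ^ 2 ≤ Ly ^ 2 * ‖xplus - x‖ ^ 2 := by
    rw [norm_sub_rev xplus, ← mul_pow]
    exact pow_le_pow_left₀ (norm_nonneg _) (hystar_lip x xplus) 2
  calc ‖yplus - ystar xplus‖ ^ 2
      ≤ (1 + c₁) * ((1 + c₀) * ((1 - 2 * β * μg * Lg / (μg + Lg)) * ‖y - ystar x‖ ^ 2 +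
            (β ^ 2 - 2 * β / (μg + Lg)) * ‖grady g x y‖ ^ 2) + (1 + 1 / c₀) * (β ^ 2 * ‖e‖ ^ 2)) +
          (1 + 1 / c₁) * (Ly ^ 2 * ‖xplus - x‖ ^ 2) := by
        refine hmove.trans ?_
        gcongr
        exact herror.trans (by gcongr)
    _ = _ := by ring

/-- Lemma 5 (pathwise): error bound on the lower-level approximation after one inexact
gradient step with gradient error `e` and an upper-level move from `x` to `x⁺`. -/
theorem lower_level_error_bound
    {E F : Type*} [NormedAddCommGroup E] [InnerProductSpace ℝ E] [FiniteDimensional ℝ E]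
    [NormedAddCommGroup F] [InnerProductSpace ℝ F] [FiniteDimensional ℝ F]
    (g : E × F → ℝ) (ystar : E → F) (μg Lg Ly : ℝ)
    (hμ : 0 < μg) (hμL : μg ≤ Lg)
    (hdiff : ∀ x : E, Differentiable ℝ (fun y : F => g (x, y)))
    (hsc : ∀ x : E, ConvexOn ℝ Set.univ (fun y : F => g (x, y) - μg / 2 * ‖y‖ ^ 2))
    (hlip : ∀ (x : E) (y z : F), ‖grady g x y - grady g x z‖ ≤ Lg * ‖y - z‖)
    (hmin : ∀ (x : E) (y : F), g (x, ystar x) ≤ g (x, y))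
    (huniq : ∀ (x : E) (y : F), (∀ z, g (x, y) ≤ g (x, z)) → y = ystar x)
    (hystar_lip : ∀ x₁ x₂ : E, ‖ystar x₁ - ystar x₂‖ ≤ Ly * ‖x₁ - x₂‖)
    (x xplus : E) (y e : F) (β c₀ c₁ : ℝ)
    (hβ : 0 ≤ β) (hc₀ : 0 < c₀) (hc₁ : 0 < c₁)
    (yplus : F) (hyplus : yplus = y - β • (grady g x y + e)) :
    ‖yplus - ystar xplus‖ ^ 2 ≤
      (1 + 1 / c₁) * Ly ^ 2 * ‖xplus - x‖ ^ 2 +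
        (1 + c₁) * (1 + c₀) * (1 - 2 * β * μg * Lg / (μg + Lg)) * ‖y - ystar x‖ ^ 2 +
        (1 + c₁) * (1 + c₀) * (β ^ 2 - 2 * β / (μg + Lg)) * ‖grady g x y‖ ^ 2 +
        (1 + c₁) * (1 + 1 / c₀) * β ^ 2 * ‖e‖ ^ 2 :=
  lower_level_error_bound_general g ystar μg Lg Ly hμ hμL hdiff hsc hlip hmin hystar_lip x xplus y e
    β c₀ c₁ hβ hc₀ hc₁ yplus hyplus
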